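/- Let G be a finite simple undirected connected graph with at least two vertices and positive vertex weights, with bottleneck decomposition {(B_1,C_1),…,(B_k,C_k)} and α_i = w(C_i)/w(B_i), and let X be a BD-mechanism allocation. Then X is lexicographically optimal: for every allocation X' on G, the nondecreasing rearrangement of the exchange-ratio vector (β_u(X))_{u∈V} is greater than or equal to the nondecreasing rearrangement of (β_u(X'))_{u∈V} in the lexicographic order. -/

import Mathlib

open Finset

/-- The total weight of a finite set of vertices. -/
def wsum {V : Type*} (w : V → ℝ) (S : Finset V) : ℝ := ∑ v ∈ S, w v

/-- The neighborhood of `S` inside the induced subgraph on `A`: all vertices of `A` adjacent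
to at least one vertex of `S`. -/
def nbhdIn {V : Type*} [DecidableEq V] (G : SimpleGraph V) [DecidableRel G.Adj]
    (A S : Finset V) : Finset V :=
  A.filter fun v => ∃ u ∈ S, G.Adj u v

/-- The α-ratio of `S` computed inside the induced subgraph on `A`. -/
noncomputable def alphaIn {V : Type*} [DecidableEq V] (G : SimpleGraph V)
    [DecidableRel G.Adj] (w : V → ℝ) (A S : Finset V) : ℝ :=
  wsum w (nbhdIn G A S) / wsum w S

/-- `B` is the maximal bottleneck of the induced subgraph `G[A]`: it is a nonempty subset of
`A` of minimal α-ratio (within `G[A]`) and every strictly larger subset of `A` has strictly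
larger α-ratio. -/
def IsMaxBottleneckIn {V : Type*} [DecidableEq V] (G : SimpleGraph V) [DecidableRel G.Adj]
    (w : V → ℝ) (A B : Finset V) : Prop :=
  B.Nonempty ∧ B ⊆ A ∧
    (∀ S : Finset V, S.Nonempty → S ⊆ A → alphaIn G w A B ≤ alphaIn G w A S) ∧
    ∀ B' : Finset V, B ⊂ B' → B' ⊆ A → alphaIn G w A B < alphaIn G w A B'


/-- `x` is an allocation on `G`: nonnegative, supported on edges, and each vertex
distributes its whole (unit fraction of) resource: `Σ_{v∈Γ(u)} x_{uv} = 1`. -/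
def IsAllocation {V : Type*} [Fintype V] [DecidableEq V] (G : SimpleGraph V)
    [DecidableRel G.Adj] (x : V → V → ℝ) : Prop :=
  (∀ u v, 0 ≤ x u v) ∧ (∀ u v, ¬ G.Adj u v → x u v = 0) ∧
    ∀ u : V, ∑ v ∈ G.neighborFinset u, x u v = 1

/-- The utility `U_u(X) = Σ_{v∈Γ(u)} x_{vu}·w(v)` of agent `u` under allocation `x`. -/
def util {V : Type*} [Fintype V] [DecidableEq V] (G : SimpleGraph V) [DecidableRel G.Adj]
    (w : V → ℝ) (x : V → V → ℝ) (u : V) : ℝ :=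
  ∑ v ∈ G.neighborFinset u, x v u * w v

/-- `x` is a BD-mechanism allocation for the bottleneck decomposition `(B i, C i)` with
α-ratios `alpha i`: it is an allocation, exchange happens only along edges between `B i`
and `C i` of the same pair, and `x_{vu}·w(v) = α_i·x_{uv}·w(u)` for every edge `(u,v)`
with `u ∈ B i`, `v ∈ C i`. -/
def IsBDAllocation {V : Type*} [Fintype V] [DecidableEq V] (G : SimpleGraph V)
    [DecidableRel G.Adj] (w : V → ℝ) (k : ℕ) (B C : Fin k → Finset V)
    (x : V → V → ℝ) : Prop :=
  IsAllocation G x ∧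
    (∀ u v : V, x u v ≠ 0 → ∃ i : Fin k, (u ∈ B i ∧ v ∈ C i) ∨ (u ∈ C i ∧ v ∈ B i)) ∧
    ∀ i : Fin k, ∀ u ∈ B i, ∀ v ∈ C i, G.Adj u v →
      x v u * w v = (wsum w (C i) / wsum w (B i)) * (x u v * w u)

/-- The exchange ratio `β_u(X) = U_u(X)/w(u)` of agent `u` under allocation `x`. -/
noncomputable def exRatio {V : Type*} [Fintype V] [DecidableEq V] (G : SimpleGraph V)
    [DecidableRel G.Adj] (w : V → ℝ) (x : V → V → ℝ) (u : V) : ℝ :=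
  util G w x u / w u

/-- `lexLE f g`: the vector `f` is less than or equal to `g` in the lexicographic order. -/
def lexLE {n : ℕ} (f g : Fin n → ℝ) : Prop :=
  f = g ∨ ∃ i : Fin n, (∀ j : Fin n, j < i → f j = g j) ∧ f i < g i

/-- `x` is lexicographically optimal: for every allocation `y`, the nondecreasing
rearrangement of the exchange-ratio vector of `y` is lexicographically at most the
nondecreasing rearrangement of that of `x` (rearrangements being given by monotone
enumerations of the vertices). -/
def LexOptimal {V : Type*} [Fintype V] [DecidableEq V] (G : SimpleGraph V)
    [DecidableRel G.Adj] (w : V → ℝ) (x : V → V → ℝ) : Prop :=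
  ∀ y : V → V → ℝ, IsAllocation G y →
    ∀ e e' : Fin (Fintype.card V) ≃ V,
      Monotone (fun i => exRatio G w x (e i)) →
      Monotone (fun i => exRatio G w y (e' i)) →
      lexLE (fun i => exRatio G w y (e' i)) (fun i => exRatio G w x (e i))

/-!
Write `β` and `β'` for the exchange ratios under the BD allocation `X` and under another
allocation `Y`. If the sorted vectors first differ at a position where `β'` is larger, and `θ` is
the value of the sorted `β` there, then for every level `a ≤ θ` no more vertices have `β' < a`
than `β < a`.

`X` gives ratio `α_i` on `B_i` and `1/α_i` on `C_i \ B_i`, where `α_1 < ⋯ < α_k ≤ 1`. Climb the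
levels up to `θ`: first the `α_i` in increasing order, then the `1/α_i` in decreasing order. At
each level the counting bound forces `Y` to give the vertices of that level at least their
`X`-ratio. But only `C_i` can send into `B_i`, and only `B_i \ C_i` into `C_i \ B_i`, once the
earlier levels are saturated. Their weights are `α_i·w(B_i)` and at most `w(C_i \ B_i)/α_i`
(by minimality of `α_i`). So `Y` agrees with `X` there, and these senders are saturated in turn.
Hence `Y` agrees with `X` wherever `β ≤ θ`, so at least as many vertices have `β' ≤ θ` as
`β ≤ θ`. That contradicts the choice of `θ`.
-/

section Weights

variable {V : Type*} {w : V → ℝ}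

lemma wsum_pos (hw : ∀ v, 0 < w v) {S : Finset V} (hS : S.Nonempty) : 0 < wsum w S :=
  sum_pos (fun v _ => hw v) hS

lemma wsum_le_wsum (hw : ∀ v, 0 < w v) {S T : Finset V} (h : S ⊆ T) : wsum w S ≤ wsum w T :=
  sum_le_sum_of_subset_of_nonneg h fun v _ _ => (hw v).le

lemma wsum_union_le [DecidableEq V] (hw : ∀ v, 0 < w v) (S T : Finset V) :
    wsum w (S ∪ T) ≤ wsum w S + wsum w T := by
  have h := sum_union_inter (s₁ := S) (s₂ := T) (f := w)
  have h0 : 0 ≤ ∑ v ∈ S ∩ T, w v := sum_nonneg fun v _ => (hw v).le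
  unfold wsum
  linarith

lemma wsum_inter_add_wsum_sdiff [DecidableEq V] (S T : Finset V) :
    wsum w (S ∩ T) + wsum w (S \ T) = wsum w S :=
  sum_inter_add_sum_sdiff S T w

def payment (y : V → V → ℝ) (v : V) (S : Finset V) : ℝ := ∑ u ∈ S, y v u

end Weights

section Allocation

variable {V : Type*} [Fintype V] [DecidableEq V] {G : SimpleGraph V} [DecidableRel G.Adj]
  {w : V → ℝ} {x y : V → V → ℝ}

def IsTight (G : SimpleGraph V) [DecidableRel G.Adj] (w : V → ℝ) (y : V → V → ℝ)
    (S P : Finset V) (a : ℝ) : Prop :=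
  (∀ u ∈ S, exRatio G w y u = a) ∧ ∀ v ∈ P, payment y v S = 1

lemma util_eq_exRatio_mul (hw : ∀ v, 0 < w v) (y : V → V → ℝ) (u : V) :
    util G w y u = exRatio G w y u * w u :=
  (div_mul_cancel₀ _ (hw u).ne').symm

namespace IsAllocation

lemma payment_nonneg (hy : IsAllocation G y) (v : V) (S : Finset V) : 0 ≤ payment y v S :=
  sum_nonneg fun u _ => hy.1 v u

lemma sum_eq_one (hy : IsAllocation G y) (v : V) : ∑ u, y v u = 1 := by
  rw [← hy.2.2 v]
  exact (sum_subset (subset_univ _) fun u _ hu => hy.2.1 v u (by simpa using hu)).symm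

lemma payment_le_one (hy : IsAllocation G y) (v : V) (S : Finset V) : payment y v S ≤ 1 :=
  hy.sum_eq_one v ▸ sum_le_sum_of_subset_of_nonneg (subset_univ S) fun u _ _ => hy.1 v u

lemma payment_eq_zero_of_disjoint (hy : IsAllocation G y) {v : V} {S T : Finset V}
    (hT : payment y v T = 1) (hST : Disjoint S T) : payment y v S = 0 := by
  have h := hy.payment_le_one v (S ∪ T)
  have h0 := hy.payment_nonneg v S
  unfold payment at h h0 hT ⊢
  rw [sum_union hST] at h
  linarith

lemma payment_eq_zero_of_not_adj (hy : IsAllocation G y) {v : V} {S : Finset V}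
    (h : ∀ u ∈ S, ¬ G.Adj v u) : payment y v S = 0 :=
  sum_eq_zero fun u hu => hy.2.1 v u (h u hu)

lemma sum_util_eq (hy : IsAllocation G y) (w : V → ℝ) (S : Finset V) :
    ∑ u ∈ S, util G w y u = ∑ v, w v * payment y v S := by
  have hext : ∀ u, util G w y u = ∑ v, y v u * w v := fun u =>
    sum_subset (subset_univ _) fun v _ hv => by
      rw [hy.2.1 v u fun h => hv (by simpa using h.symm), zero_mul]
  simp_rw [hext, payment, mul_sum]
  rw [sum_comm]
  simp_rw [mul_comm]

lemma isTight_of_le (hy : IsAllocation G y) (hw : ∀ v, 0 < w v) {S P : Finset V} {a : ℝ}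
    (hlow : ∀ u ∈ S, a ≤ exRatio G w y u) (hpay : ∀ v ∉ P, payment y v S = 0)
    (hP : wsum w P ≤ a * wsum w S) : IsTight G w y S P a := by
  have hflow : ∑ u ∈ S, util G w y u = ∑ v ∈ P, w v * payment y v S := by
    rw [hy.sum_util_eq]
    exact (sum_subset (subset_univ P) fun v _ hv => by rw [hpay v hv, mul_zero]).symm
  have hS : ∀ u ∈ S, 0 ≤ (exRatio G w y u - a) * w u := fun u hu =>
    mul_nonneg (sub_nonneg.2 (hlow u hu)) (hw u).le
  have hP' : ∀ v ∈ P, 0 ≤ w v * (1 - payment y v S) := fun v _ =>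
    mul_nonneg (hw v).le (sub_nonneg.2 (hy.payment_le_one v S))
  -- the two nonnegative slacks add up to something `≤ 0` by `hP` and `hflow`
  have htotal : ∑ u ∈ S, (exRatio G w y u - a) * w u + ∑ v ∈ P, w v * (1 - payment y v S)
      = (wsum w P - a * wsum w S) + (∑ u ∈ S, util G w y u - ∑ v ∈ P, w v * payment y v S) := by
    simp only [wsum, sub_mul, mul_sub, sum_sub_distrib, mul_sum, mul_one,
      util_eq_exRatio_mul hw]
    ring
  have hS0 := (sum_eq_zero_iff_of_nonneg hS).1 (by linarith [sum_nonneg hS, sum_nonneg hP'])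
  have hP0 := (sum_eq_zero_iff_of_nonneg hP').1 (by linarith [sum_nonneg hS, sum_nonneg hP'])
  refine ⟨fun u hu => ?_, fun v hv => ?_⟩
  · rcases mul_eq_zero.1 (hS0 u hu) with h | h
    · linarith
    · exact absurd h (hw u).ne'
  · rcases mul_eq_zero.1 (hP0 v hv) with h | h
    · exact absurd h (hw v).ne'
    · linarith

lemma exRatio_eq_of_forall_adj (hx : IsAllocation G x) {u : V} (hu : 0 < w u) {c : ℝ}
    (h : ∀ v, G.Adj u v → x v u * w v = c * (x u v * w u)) : exRatio G w x u = c := by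
  have hutil : util G w x u = c * w u := by
    rw [util, sum_congr rfl fun v hv => h v ((G.mem_neighborFinset u v).1 hv), ← mul_sum,
      ← sum_mul, hx.2.2 u, one_mul]
  rw [exRatio, hutil, mul_div_cancel_right₀ _ hu.ne']

end IsAllocation

end Allocation

section SortedVectors

variable {V : Type*} [Fintype V] {n : ℕ}

lemma card_filter_comp_equiv (e : Fin n ≃ V) (p : V → Prop) [DecidablePred p] :
    #{j | p (e j)} = #{u | p u} :=
  card_equiv e fun j => by simp

lemma lexLE_of_forall_card_filter {f g : V → ℝ} (e e' : Fin n ≃ V)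
    (hf : Monotone fun i => f (e i)) (hg : Monotone fun i => g (e' i))
    (h : ∀ θ, (∀ a ≤ θ, #{u | g u < a} ≤ #{u | f u < a}) → #{u | f u ≤ θ} ≤ #{u | g u ≤ θ}) :
    lexLE (fun i => g (e' i)) (fun i => f (e i)) := by
  by_cases heq : (fun i => g (e' i)) = fun i => f (e i)
  · exact .inl heq
  obtain ⟨m, hm, hmin⟩ := WellFounded.has_min wellFounded_lt
    {j | g (e' j) ≠ f (e j)} (Function.ne_iff.1 heq)
  have hagree : ∀ j < m, g (e' j) = f (e j) := fun j hj => by_contra fun hne => hmin j hne hj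
  rcases lt_or_gt_of_ne hm with hlt | hgt
  · exact .inr ⟨m, hagree, hlt⟩
  exfalso
  set θ := f (e m)
  have hbelow : ∀ a ≤ θ, #{u | g u < a} ≤ #{u | f u < a} := by
    intro a ha
    rw [← card_filter_comp_equiv e', ← card_filter_comp_equiv e]
    refine card_le_card fun j hj => ?_
    simp only [mem_filter, mem_univ, true_and] at hj ⊢
    have hjm : j < m := lt_of_not_ge fun hmj => by linarith [hg hmj]
    rwa [← hagree j hjm]
  have hf_card : m.val + 1 ≤ #{u | f u ≤ θ} := by
    rw [← card_filter_comp_equiv e, ← Fin.card_Iic]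
    exact card_le_card fun j hj => by simpa using hf (mem_Iic.1 hj)
  have hg_card : #{u | g u ≤ θ} ≤ m.val := by
    rw [← card_filter_comp_equiv e', ← Fin.card_Iio]
    refine card_le_card fun j hj => ?_
    simp only [mem_filter, mem_univ, true_and] at hj
    exact mem_Iio.2 (lt_of_not_ge fun hmj => by linarith [hg hmj])
  linarith [h θ hbelow]

lemma le_of_card_filter_lt_le {f g : V → ℝ} {a : ℝ}
    (hcard : #{u | g u < a} ≤ #{u | f u < a}) (hsub : ∀ u, f u < a → g u < a) {u : V}
    (hu : a ≤ f u) : a ≤ g u := by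
  by_contra! hgu
  have hEq : univ.filter (fun u => f u < a) = univ.filter (fun u => g u < a) :=
    eq_of_subset_of_card_le (fun z hz => by simpa using hsub z (by simpa using hz)) hcard
  have hmem : u ∈ univ.filter (fun u => g u < a) := by simpa using hgu
  rw [← hEq, mem_filter] at hmem
  linarith [hmem.2]

end SortedVectors

/-- Blocks are indexed from `0`: `(B i, C i)` is the paper's `(B_{i+1}, C_{i+1})` and
`Vs i.castSucc` its `V_{i+1}`. -/
structure IsBottleneckDecomposition {V : Type*} [Fintype V] [DecidableEq V]
    (G : SimpleGraph V) [DecidableRel G.Adj] (w : V → ℝ) {k : ℕ} (B C : Fin k → Finset V)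
    (Vs : Fin (k + 1) → Finset V) : Prop where
  vs_zero : Vs 0 = univ
  vs_succ : ∀ i : Fin k, Vs i.succ = Vs i.castSucc \ (B i ∪ C i)
  vs_last : Vs (Fin.last k) = ∅
  isMaxBottleneckIn : ∀ i : Fin k, IsMaxBottleneckIn G w (Vs i.castSucc) (B i)
  C_eq : ∀ i : Fin k, C i = nbhdIn G (Vs i.castSucc) (B i)

/-- The paper's `α_i`. -/
noncomputable def blockRatio {V : Type*} (w : V → ℝ) {k : ℕ} (B C : Fin k → Finset V)
    (i : Fin k) : ℝ :=
  wsum w (C i) / wsum w (B i)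

namespace IsBottleneckDecomposition

variable {V : Type*} [Fintype V] [DecidableEq V] {G : SimpleGraph V} [DecidableRel G.Adj]
  {w : V → ℝ} {k : ℕ} {B C : Fin k → Finset V} {Vs : Fin (k + 1) → Finset V}
  {i j : Fin k} {u v : V}

lemma antitone (hD : IsBottleneckDecomposition G w B C Vs) : Antitone Vs :=
  Fin.antitone_iff_succ_le.2 fun i => by rw [hD.vs_succ]; exact sdiff_subset

lemma B_subset (hD : IsBottleneckDecomposition G w B C Vs) (i : Fin k) : B i ⊆ Vs i.castSucc :=
  (hD.isMaxBottleneckIn i).2.1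

lemma mem_C_iff (hD : IsBottleneckDecomposition G w B C Vs) :
    v ∈ C i ↔ v ∈ Vs i.castSucc ∧ ∃ u ∈ B i, G.Adj u v := by
  rw [hD.C_eq i, nbhdIn, mem_filter]

lemma block_subset (hD : IsBottleneckDecomposition G w B C Vs) (i : Fin k) :
    B i ∪ C i ⊆ Vs i.castSucc :=
  union_subset (hD.B_subset i) fun _ hv => (hD.mem_C_iff.1 hv).1

lemma notMem_succ (hD : IsBottleneckDecomposition G w B C Vs) (hv : v ∈ B i ∪ C i) :
    v ∉ Vs i.succ := by
  rw [hD.vs_succ]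
  exact fun h => (mem_sdiff.1 h).2 hv

lemma le_of_mem_block (hD : IsBottleneckDecomposition G w B C Vs) (hv : v ∈ B i ∪ C i)
    (hj : v ∈ Vs j.castSucc) : j ≤ i :=
  le_of_not_gt fun hij => hD.notMem_succ hv (hD.antitone (Fin.succ_le_castSucc_iff.2 hij) hj)

lemma eq_of_mem_block (hD : IsBottleneckDecomposition G w B C Vs) (hi : v ∈ B i ∪ C i)
    (hj : v ∈ B j ∪ C j) : i = j :=
  le_antisymm (hD.le_of_mem_block hj (hD.block_subset i hi))
    (hD.le_of_mem_block hi (hD.block_subset j hj))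

lemma disjoint_of_ne (hD : IsBottleneckDecomposition G w B C Vs) (hij : i ≠ j)
    {S T : Finset V} (hS : S ⊆ B i ∪ C i) (hT : T ⊆ B j ∪ C j) : Disjoint S T :=
  disjoint_left.2 fun _ hvS hvT => hij (hD.eq_of_mem_block (hS hvS) (hT hvT))

lemma exists_mem_block (hD : IsBottleneckDecomposition G w B C Vs) (v : V) :
    ∃ i, v ∈ B i ∪ C i := by
  suffices h : ∀ j, v ∈ Vs j → ∃ i, v ∈ B i ∪ C i from h 0 (hD.vs_zero ▸ mem_univ v)
  intro j
  induction j using Fin.reverseInduction with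
  | last => simp [hD.vs_last]
  | cast i ih =>
    intro hv
    by_cases hvi : v ∈ B i ∪ C i
    · exact ⟨i, hvi⟩
    · exact ih (hD.vs_succ i ▸ mem_sdiff.2 ⟨hv, hvi⟩)

lemma exists_le_mem_C_of_adj (hD : IsBottleneckDecomposition G w B C Vs) (hu : u ∈ B i)
    (huv : G.Adj u v) : ∃ j ≤ i, v ∈ C j := by
  by_cases hv : v ∈ Vs i.castSucc
  · exact ⟨i, le_rfl, hD.mem_C_iff.2 ⟨hv, u, hu, huv⟩⟩
  obtain ⟨j, hj⟩ := hD.exists_mem_block v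
  have hji : j < i := lt_of_not_ge fun hij => hv (hD.antitone
    (Fin.castSucc_le_castSucc_iff.2 hij) (hD.block_subset j hj))
  refine ⟨j, hji.le, (mem_union.1 hj).resolve_left fun hvB => hji.ne ?_⟩
  have huC : u ∈ C j := hD.mem_C_iff.2
    ⟨hD.antitone (Fin.castSucc_le_castSucc_iff.2 hji.le) (hD.B_subset i hu), v, hvB, huv.symm⟩
  exact hD.eq_of_mem_block (mem_union_right _ huC) (mem_union_left _ hu)

lemma alphaIn_eq_blockRatio (hD : IsBottleneckDecomposition G w B C Vs) (i : Fin k) :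
    alphaIn G w (Vs i.castSucc) (B i) = blockRatio w B C i := by
  rw [alphaIn, ← hD.C_eq i, blockRatio]

lemma blockRatio_le_one (hD : IsBottleneckDecomposition G w B C Vs) (hw : ∀ v, 0 < w v)
    (i : Fin k) : blockRatio w B C i ≤ 1 := by
  have hne : (Vs i.castSucc).Nonempty := (hD.isMaxBottleneckIn i).1.mono (hD.B_subset i)
  have hmin := (hD.isMaxBottleneckIn i).2.2.1 _ hne subset_rfl
  rw [hD.alphaIn_eq_blockRatio] at hmin
  exact hmin.trans ((div_le_one (wsum_pos hw hne)).2 (wsum_le_wsum hw (filter_subset _ _)))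

/-- Maximality of `B_a` against `B_a ∪ B_b` for the next block `b`. -/
lemma blockRatio_lt_of_succ (hD : IsBottleneckDecomposition G w B C Vs) (hw : ∀ v, 0 < w v)
    {a b : Fin k} (hab : Vs b.castSucc = Vs a.succ) : blockRatio w B C a < blockRatio w B C b := by
  have hBb_sub : B b ⊆ Vs a.succ := hab ▸ hD.B_subset b
  have hdisj : Disjoint (B a) (B b) :=
    disjoint_right.2 fun _ hv hva => hD.notMem_succ (mem_union_left _ hva) (hBb_sub hv)
  have hsub : B a ∪ B b ⊆ Vs a.castSucc :=
    union_subset (hD.B_subset a) (hBb_sub.trans (hD.antitone (Fin.castSucc_le_succ a)))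
  have hss : B a ⊂ B a ∪ B b := by
    obtain ⟨v, hv⟩ := (hD.isMaxBottleneckIn b).1
    exact ssubset_iff_of_subset subset_union_left |>.2
      ⟨v, mem_union_right _ hv, fun hva => disjoint_left.1 hdisj hva hv⟩
  have hnbhd : nbhdIn G (Vs a.castSucc) (B a ∪ B b) ⊆ C a ∪ C b := by
    intro z hz
    obtain ⟨hzV, t, ht, htz⟩ := mem_filter.1 hz
    rcases mem_union.1 ht with hta | htb
    · exact mem_union_left _ (hD.mem_C_iff.2 ⟨hzV, t, hta, htz⟩)
    by_cases hz' : z ∈ Vs a.succ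
    · exact mem_union_right _ (hD.mem_C_iff.2 ⟨hab ▸ hz', t, htb, htz⟩)
    have hzBC : z ∈ B a ∪ C a := by
      by_contra h
      exact hz' (hD.vs_succ a ▸ mem_sdiff.2 ⟨hzV, h⟩)
    refine mem_union_left _ ((mem_union.1 hzBC).resolve_left fun hzB => ?_)
    have htC : t ∈ C a := hD.mem_C_iff.2 ⟨hsub (mem_union_right _ htb), z, hzB, htz.symm⟩
    exact hD.notMem_succ (mem_union_right _ htC) (hBb_sub htb)
  have hunion : wsum w (B a ∪ B b) = wsum w (B a) + wsum w (B b) := sum_union hdisj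
  have hmax := (hD.isMaxBottleneckIn a).2.2.2 _ hss hsub
  rw [hD.alphaIn_eq_blockRatio, alphaIn, hunion] at hmax
  have hBa := wsum_pos hw (hD.isMaxBottleneckIn a).1
  have hBb := wsum_pos hw (hD.isMaxBottleneckIn b).1
  have hN : wsum w (nbhdIn G (Vs a.castSucc) (B a ∪ B b)) ≤ wsum w (C a) + wsum w (C b) :=
    (wsum_le_wsum hw hnbhd).trans (wsum_union_le hw _ _)
  by_contra! hba
  unfold blockRatio at hmax hba
  rw [div_le_div_iff₀ hBb hBa] at hba
  rw [div_lt_div_iff₀ hBa (by positivity)] at hmax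
  nlinarith [mul_le_mul_of_nonneg_right hN hBa.le]

lemma blockRatio_strictMono (hD : IsBottleneckDecomposition G w B C Vs) (hw : ∀ v, 0 < w v) :
    StrictMono (blockRatio w B C) := by
  cases k with
  | zero => exact fun i => i.elim0
  | succ n =>
    exact Fin.strictMono_iff_lt_succ.2 fun i =>
      hD.blockRatio_lt_of_succ hw (congrArg Vs (Fin.succ_castSucc i).symm)

/-- Minimality of `α_i` against `B_i \ C_i`, whose neighbourhood lies in `C_i \ B_i`. -/
lemma wsum_sdiff_mul_le (hD : IsBottleneckDecomposition G w B C Vs) (hw : ∀ v, 0 < w v)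
    (i : Fin k) :
    wsum w (B i \ C i) * wsum w (C i) ≤ wsum w (C i \ B i) * wsum w (B i) := by
  have hBpos := wsum_pos hw (hD.isMaxBottleneckIn i).1
  have hCB : 0 ≤ wsum w (C i \ B i) * wsum w (B i) :=
    mul_nonneg (sum_nonneg fun v _ => (hw v).le) hBpos.le
  rcases (B i \ C i).eq_empty_or_nonempty with hempty | hne
  · simpa [hempty, wsum] using hCB
  have hnbhd : nbhdIn G (Vs i.castSucc) (B i \ C i) ⊆ C i \ B i := by
    intro z hz
    obtain ⟨hzV, t, ht, htz⟩ := mem_filter.1 hz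
    refine mem_sdiff.2 ⟨hD.mem_C_iff.2 ⟨hzV, t, (mem_sdiff.1 ht).1, htz⟩, fun hzB => ?_⟩
    exact (mem_sdiff.1 ht).2 (hD.mem_C_iff.2 ⟨hD.B_subset i (mem_sdiff.1 ht).1, z, hzB, htz.symm⟩)
  have hmin := (hD.isMaxBottleneckIn i).2.2.1 _ hne (sdiff_subset.trans (hD.B_subset i))
  rw [hD.alphaIn_eq_blockRatio, alphaIn, blockRatio] at hmin
  have hle := hmin.trans (div_le_div_of_nonneg_right (wsum_le_wsum hw hnbhd)
    (wsum_pos hw hne).le)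
  rw [div_le_div_iff₀ hBpos (wsum_pos hw hne)] at hle
  linarith

lemma blockRatio_eq_one (hD : IsBottleneckDecomposition G w B C Vs) (hw : ∀ v, 0 < w v)
    (hBC : (B i ∩ C i).Nonempty) : blockRatio w B C i = 1 := by
  have hBpos := wsum_pos hw (hD.isMaxBottleneckIn i).1
  have hle := hD.wsum_sdiff_mul_le hw i
  have hB := wsum_inter_add_wsum_sdiff (w := w) (B i) (C i)
  have hC := wsum_inter_add_wsum_sdiff (w := w) (C i) (B i)
  rw [inter_comm] at hC
  have hO := wsum_pos hw hBC
  -- with `O = w(B ∩ C) > 0`, `hle` reads `(w(B) - O)·w(C) ≤ (w(C) - O)·w(B)`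
  have hCB : wsum w (B i) ≤ wsum w (C i) := by nlinarith
  exact le_antisymm (hD.blockRatio_le_one hw i) ((one_le_div hBpos).2 hCB)

end IsBottleneckDecomposition

namespace IsBDAllocation

variable {V : Type*} [Fintype V] [DecidableEq V] {G : SimpleGraph V} [DecidableRel G.Adj]
  {w : V → ℝ} {k : ℕ} {B C : Fin k → Finset V} {Vs : Fin (k + 1) → Finset V}
  {x y : V → V → ℝ} {i : Fin k} {u v : V}

lemma mem_of_ne_zero (hx : IsBDAllocation G w k B C x) (hD : IsBottleneckDecomposition G w B C Vs)
    (hu : u ∈ B i ∪ C i) (h : x u v ≠ 0 ∨ x v u ≠ 0) :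
    (u ∈ B i ∧ v ∈ C i) ∨ (u ∈ C i ∧ v ∈ B i) := by
  rcases h with h | h
  · obtain ⟨j, hj⟩ := hx.2.1 u v h
    have hji : j = i := by
      rcases hj with hj | hj
      · exact hD.eq_of_mem_block (mem_union_left _ hj.1) hu
      · exact hD.eq_of_mem_block (mem_union_right _ hj.1) hu
    exact hji ▸ hj
  · obtain ⟨j, hj⟩ := hx.2.1 v u h
    have hji : j = i := by
      rcases hj with hj | hj
      · exact hD.eq_of_mem_block (mem_union_right _ hj.2) hu
      · exact hD.eq_of_mem_block (mem_union_left _ hj.2) hu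
    subst hji
    exact hj.symm.imp And.symm And.symm

lemma exchange_eq (hx : IsBDAllocation G w k B C x) (hu : u ∈ B i) (hv : v ∈ C i)
    (huv : G.Adj u v) : x v u * w v = blockRatio w B C i * (x u v * w u) :=
  hx.2.2 i u hu v hv huv

lemma C_nonempty (hx : IsBDAllocation G w k B C x) (hD : IsBottleneckDecomposition G w B C Vs)
    (i : Fin k) : (C i).Nonempty := by
  obtain ⟨u, hu⟩ := (hD.isMaxBottleneckIn i).1
  obtain ⟨v, -, hv⟩ := exists_ne_zero_of_sum_ne_zero (hx.1.2.2 u ▸ one_ne_zero)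
  rcases hx.mem_of_ne_zero hD (mem_union_left _ hu) (.inl hv) with h | h
  · exact ⟨v, h.2⟩
  · exact ⟨u, h.1⟩

lemma blockRatio_pos (hx : IsBDAllocation G w k B C x) (hD : IsBottleneckDecomposition G w B C Vs)
    (hw : ∀ v, 0 < w v) (i : Fin k) : 0 < blockRatio w B C i :=
  div_pos (wsum_pos hw (hx.C_nonempty hD i)) (wsum_pos hw (hD.isMaxBottleneckIn i).1)

lemma one_le_inv_blockRatio (hx : IsBDAllocation G w k B C x)
    (hD : IsBottleneckDecomposition G w B C Vs) (hw : ∀ v, 0 < w v) (i : Fin k) :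
    1 ≤ (blockRatio w B C i)⁻¹ :=
  (one_le_inv₀ (hx.blockRatio_pos hD hw i)).2 (hD.blockRatio_le_one hw i)

lemma exRatio_of_mem_B (hx : IsBDAllocation G w k B C x)
    (hD : IsBottleneckDecomposition G w B C Vs) (hw : ∀ v, 0 < w v) (hu : u ∈ B i) :
    exRatio G w x u = blockRatio w B C i := by
  refine hx.1.exRatio_eq_of_forall_adj (hw u) fun v huv => ?_
  by_cases h0 : x u v = 0 ∧ x v u = 0
  · simp [h0]
  rcases hx.mem_of_ne_zero hD (mem_union_left _ hu) (not_and_or.1 h0) with ⟨-, hv⟩ | ⟨huC, hv⟩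
  · exact hx.exchange_eq hu hv huv
  · have hrule := hx.exchange_eq hv huC huv.symm
    rw [hD.blockRatio_eq_one hw ⟨u, mem_inter.2 ⟨hu, huC⟩⟩] at hrule ⊢
    linarith

lemma exRatio_of_mem_C (hx : IsBDAllocation G w k B C x)
    (hD : IsBottleneckDecomposition G w B C Vs) (hw : ∀ v, 0 < w v) (hu : u ∈ C i)
    (huB : u ∉ B i) : exRatio G w x u = (blockRatio w B C i)⁻¹ := by
  refine hx.1.exRatio_eq_of_forall_adj (hw u) fun v huv => ?_
  by_cases h0 : x u v = 0 ∧ x v u = 0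
  · simp [h0]
  rcases hx.mem_of_ne_zero hD (mem_union_right _ hu) (not_and_or.1 h0) with ⟨huB', -⟩ | ⟨-, hv⟩
  · exact absurd huB' huB
  · rw [hx.exchange_eq hv hu huv.symm, inv_mul_cancel_left₀ (hx.blockRatio_pos hD hw i).ne']

lemma isTight_B (hx : IsBDAllocation G w k B C x) (hD : IsBottleneckDecomposition G w B C Vs)
    (hw : ∀ v, 0 < w v) (hy : IsAllocation G y) {θ : ℝ}
    (hθ : ∀ a ≤ θ, #{u | exRatio G w y u < a} ≤ #{u | exRatio G w x u < a})
    (i : Fin k) (hi : blockRatio w B C i ≤ θ) :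
    IsTight G w y (B i) (C i) (blockRatio w B C i) := by
  induction i using WellFoundedLT.induction with
  | _ i ih =>
  have hmono := hD.blockRatio_strictMono hw
  refine hy.isTight_of_le hw (fun u hu => ?_) (fun v hv => ?_) ?_
  · refine le_of_card_filter_lt_le (hθ _ hi) (fun z hz => ?_) (hx.exRatio_of_mem_B hD hw hu).ge
    obtain ⟨j, hj⟩ := hD.exists_mem_block z
    by_cases hzB : z ∈ B j
    · rw [hx.exRatio_of_mem_B hD hw hzB] at hz
      rwa [(ih j (hmono.lt_iff_lt.1 hz) (hz.le.trans hi)).1 z hzB]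
    · rw [hx.exRatio_of_mem_C hD hw ((mem_union.1 hj).resolve_left hzB) hzB] at hz
      exact absurd hz (not_lt.2 ((hD.blockRatio_le_one hw i).trans
        (hx.one_le_inv_blockRatio hD hw j)))
  · by_cases hadj : ∃ u ∈ B i, G.Adj v u
    · obtain ⟨u, hu, hvu⟩ := hadj
      obtain ⟨l, hli, hvl⟩ := hD.exists_le_mem_C_of_adj hu hvu.symm
      have hli' : l < i := lt_of_le_of_ne hli fun h => hv (h ▸ hvl)
      exact hy.payment_eq_zero_of_disjoint ((ih l hli' ((hmono hli').le.trans hi)).2 v hvl)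
        (hD.disjoint_of_ne hli'.ne' subset_union_left subset_union_left)
    · exact hy.payment_eq_zero_of_not_adj fun u hu h => hadj ⟨u, hu, h⟩
  · exact (div_mul_cancel₀ _ (wsum_pos hw (hD.isMaxBottleneckIn i).1).ne').symm.le

lemma isTight_C_sdiff (hx : IsBDAllocation G w k B C x)
    (hD : IsBottleneckDecomposition G w B C Vs) (hw : ∀ v, 0 < w v) (hy : IsAllocation G y)
    {θ : ℝ} (hθ : ∀ a ≤ θ, #{u | exRatio G w y u < a} ≤ #{u | exRatio G w x u < a})
    (i : Fin k) (hi : (blockRatio w B C i)⁻¹ ≤ θ) :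
    IsTight G w y (C i \ B i) (B i \ C i) (blockRatio w B C i)⁻¹ := by
  induction i using WellFoundedGT.induction with
  | _ i ih =>
  have hanti : StrictAnti fun j => (blockRatio w B C j)⁻¹ := fun a b hab =>
    (inv_lt_inv₀ (hx.blockRatio_pos hD hw b) (hx.blockRatio_pos hD hw a)).2
      (hD.blockRatio_strictMono hw hab)
  have hB : ∀ j, IsTight G w y (B j) (C j) (blockRatio w B C j) := fun j =>
    hx.isTight_B hD hw hy hθ j
      ((hD.blockRatio_le_one hw j).trans ((hx.one_le_inv_blockRatio hD hw i).trans hi))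
  refine hy.isTight_of_le hw (fun u hu => ?_) (fun v hv => ?_) ?_
  · refine le_of_card_filter_lt_le (hθ _ hi) (fun z hz => ?_)
      (hx.exRatio_of_mem_C hD hw (mem_sdiff.1 hu).1 (mem_sdiff.1 hu).2).ge
    obtain ⟨j, hj⟩ := hD.exists_mem_block z
    by_cases hzB : z ∈ B j
    · rwa [(hB j).1 z hzB, ← hx.exRatio_of_mem_B hD hw hzB]
    · have hzC := (mem_union.1 hj).resolve_left hzB
      rw [hx.exRatio_of_mem_C hD hw hzC hzB] at hz
      rwa [(ih j (hanti.lt_iff_gt.1 hz) (hz.le.trans hi)).1 z (mem_sdiff.2 ⟨hzC, hzB⟩)]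
  · by_cases hvC : ∃ l, v ∈ C l
    · obtain ⟨l, hvl⟩ := hvC
      refine hy.payment_eq_zero_of_disjoint ((hB l).2 v hvl) ?_
      rcases eq_or_ne i l with rfl | hil
      · exact sdiff_disjoint
      · exact hD.disjoint_of_ne hil (sdiff_subset.trans subset_union_right) subset_union_left
    by_cases hadj : ∃ u ∈ C i \ B i, G.Adj v u
    · obtain ⟨u, hu, hvu⟩ := hadj
      replace hvC := not_exists.1 hvC
      obtain ⟨j, hj⟩ := hD.exists_mem_block v
      have hvB := (mem_union.1 hj).resolve_right (hvC j)
      obtain ⟨l, hlj, hul⟩ := hD.exists_le_mem_C_of_adj hvB hvu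
      have hli : l = i :=
        hD.eq_of_mem_block (mem_union_right _ hul) (mem_union_right _ (mem_sdiff.1 hu).1)
      have hij : i < j := lt_of_le_of_ne (hli ▸ hlj) fun h => hv (mem_sdiff.2 ⟨h ▸ hvB, hvC i⟩)
      exact hy.payment_eq_zero_of_disjoint
        ((ih j hij ((hanti hij).le.trans hi)).2 v (mem_sdiff.2 ⟨hvB, hvC j⟩))
        (hD.disjoint_of_ne hij.ne (sdiff_subset.trans subset_union_right)
          (sdiff_subset.trans subset_union_right))
    · exact hy.payment_eq_zero_of_not_adj fun u hu h => hadj ⟨u, hu, h⟩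
  · have h := hD.wsum_sdiff_mul_le hw i
    rw [blockRatio, inv_div, div_mul_eq_mul_div, le_div_iff₀ (wsum_pos hw (hx.C_nonempty hD i))]
    linarith

lemma exRatio_eq_of_card_filter_le (hx : IsBDAllocation G w k B C x)
    (hD : IsBottleneckDecomposition G w B C Vs) (hw : ∀ v, 0 < w v) (hy : IsAllocation G y)
    {θ : ℝ} (hθ : ∀ a ≤ θ, #{u | exRatio G w y u < a} ≤ #{u | exRatio G w x u < a})
    (hu : exRatio G w x u ≤ θ) : exRatio G w y u = exRatio G w x u := by
  obtain ⟨i, hi⟩ := hD.exists_mem_block u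
  by_cases huB : u ∈ B i
  · rw [hx.exRatio_of_mem_B hD hw huB] at hu ⊢
    exact (hx.isTight_B hD hw hy hθ i hu).1 u huB
  · have huC := (mem_union.1 hi).resolve_left huB
    rw [hx.exRatio_of_mem_C hD hw huC huB] at hu ⊢
    exact (hx.isTight_C_sdiff hD hw hy hθ i hu).1 u (mem_sdiff.2 ⟨huC, huB⟩)

end IsBDAllocation

theorem bd_mechanism_lex_optimal_general {V : Type*} [Fintype V] [DecidableEq V]
    (G : SimpleGraph V) [DecidableRel G.Adj] (w : V → ℝ)
    (hw : ∀ v, 0 < w v)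
    (k : ℕ) (B C : Fin k → Finset V) (Vs : Fin (k + 1) → Finset V)
    (hV0 : Vs 0 = univ)
    (hVsucc : ∀ i : Fin k, Vs i.succ = Vs i.castSucc \ (B i ∪ C i))
    (hVlast : Vs (Fin.last k) = ∅)
    (hB : ∀ i : Fin k, IsMaxBottleneckIn G w (Vs i.castSucc) (B i))
    (hC : ∀ i : Fin k, C i = nbhdIn G (Vs i.castSucc) (B i))
    (x : V → V → ℝ) (hx : IsBDAllocation G w k B C x) :
    LexOptimal G w x := by
  have hD : IsBottleneckDecomposition G w B C Vs := ⟨hV0, hVsucc, hVlast, hB, hC⟩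
  intro y hy e e' hxe hye
  refine lexLE_of_forall_card_filter e e' hxe hye fun θ hθ => card_le_card fun u hu => ?_
  simp only [mem_filter, mem_univ, true_and] at hu ⊢
  rwa [hx.exRatio_eq_of_card_filter_le hD hw hy hθ hu]

/-- every BD-mechanism allocation is lexicographically optimal. -/
theorem bd_mechanism_lex_optimal {V : Type*} [Fintype V] [DecidableEq V]
    (G : SimpleGraph V) [DecidableRel G.Adj] (w : V → ℝ)
    (hw : ∀ v, 0 < w v) (hconn : G.Connected) (hcard : 2 ≤ Fintype.card V)
    (k : ℕ) (B C : Fin k → Finset V) (Vs : Fin (k + 1) → Finset V)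
    (hV0 : Vs 0 = univ)
    (hVsucc : ∀ i : Fin k, Vs i.succ = Vs i.castSucc \ (B i ∪ C i))
    (hVlast : Vs (Fin.last k) = ∅)
    (hB : ∀ i : Fin k, IsMaxBottleneckIn G w (Vs i.castSucc) (B i))
    (hC : ∀ i : Fin k, C i = nbhdIn G (Vs i.castSucc) (B i))
    (x : V → V → ℝ) (hx : IsBDAllocation G w k B C x) :
    LexOptimal G w x :=
  bd_mechanism_lex_optimal_general G w hw k B C Vs hV0 hVsucc hVlast hB hC x hx
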